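/- arXiv:2304.02005 — 2 statements merged into one kernel-verified Lean document; each statement's English description precedes it below -/
import Mathlib

section
/- Geometric convergence of value iteration under the CVaR Bellman operator (convergence part of Theorem 1): suppose Qf : S × A × [0,1] → ℝ is a bounded function with T[Qf](s,a,y) = Qf(s,a,y) for all s ∈ S, a ∈ A, y ∈ (0,1]. Define the iterates Q_0 := Q0 (any bounded function with Q0(s,a,0) = Qf(s,a,0) for all s,a) and Q_{k+1}(s,a,y) := T[Q_k](s,a,y) for y ∈ (0,1] (with Q_{k+1}(s,a,0) := Qf(s,a,0)). Then for every k ∈ ℕ, sup_{(s,a,y) ∈ S × A × [0,1]} |Q_k(s,a,y) − Qf(s,a,y)| ≤ γ^k · sup_{(s,a,y)} |Q0(s,a,y) − Qf(s,a,y)|; in particular Q_k converges uniformly to Qf as k → ∞. -/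
/-!
The Bellman operator is a `γ`-contraction in the sup-distance over `S × A × [0,1]`: a risk
envelope `ξ ∈ U(y, p)` turns `ξ(s') p(s')` into a probability vector, and `y ξ(s') ∈ [0,1]`,
so a uniform bound `|Q - Q'| ≤ D` on `[0,1]` passes through the weighted sum, the supremum over
`ξ`, and the minimum over actions, and is multiplied by `γ`. At `y = 0` the iterates agree with
`Qf` exactly. Inducting on `k` then gives the pointwise error bound `γ ^ k` times the initial
sup-distance, which also keeps each iterate bounded.
-/

noncomputable section

/-- The CVaR risk envelope `U(y, p)`. -/
def riskEnv {Ω : Type*} [Fintype Ω] (y : ℝ) (p : Ω → ℝ) : Set (Ω → ℝ) :=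
  {ξ | (∀ ω, 0 ≤ ξ ω ∧ ξ ω ≤ 1 / y) ∧ ∑ ω, ξ ω * p ω = 1}

/-- The CVaR Bellman operator `T`. -/
def bellman {S A : Type*} [Fintype S] [Fintype A] [Nonempty A]
    (P : S → A → S → ℝ) (c : S → A → ℝ) (γ : ℝ)
    (Q : S → A → ℝ → ℝ) (s : S) (a : A) (y : ℝ) : ℝ :=
  c s a + γ * Finset.univ.inf' Finset.univ_nonempty (fun a' : A =>
    sSup ((fun ξ : S → ℝ => ∑ s', ξ s' * P s a s' * Q s' a' (y * ξ s')) ''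
      riskEnv y (P s a)))

open Set Finset

lemma Finset.inf'_le_inf'_add {ι α : Type*} [LinearOrder α] [Add α] {s : Finset ι}
    (hs : s.Nonempty) {f g : ι → α} {D : α} (h : ∀ i ∈ s, f i ≤ g i + D) :
    s.inf' hs f ≤ s.inf' hs g + D := by
  obtain ⟨i, hi, hgi⟩ := s.exists_mem_eq_inf' hs g
  rw [hgi]
  exact inf'_le_of_le f hi (h i hi)

lemma csSup_image_le_csSup_image_add {X α : Type*} [ConditionallyCompleteLattice α] [Add α]
    [AddRightMono α] {U : Set X} (hU : U.Nonempty) {f g : X → α} (hg : BddAbove (g '' U))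
    {D : α} (h : ∀ x ∈ U, f x ≤ g x + D) :
    sSup (f '' U) ≤ sSup (g '' U) + D :=
  csSup_le (hU.image f) <| by
    rintro _ ⟨x, hx, rfl⟩
    exact (h x hx).trans (add_le_add_left (le_csSup hg (mem_image_of_mem g hx)) D)

section riskEnv

variable {Ω : Type*} [Fintype Ω] {y : ℝ} {p ξ : Ω → ℝ}

lemma one_mem_riskEnv (hy0 : 0 < y) (hy1 : y ≤ 1) (hp : ∑ ω, p ω = 1) :
    (fun _ => 1) ∈ riskEnv y p :=
  ⟨fun _ => ⟨zero_le_one, by rwa [le_div_iff₀ hy0, one_mul]⟩, by simpa using hp⟩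

lemma mul_mem_Icc_of_mem_riskEnv (hy : 0 < y) (hξ : ξ ∈ riskEnv y p) (ω : Ω) :
    y * ξ ω ∈ Icc (0 : ℝ) 1 :=
  ⟨mul_nonneg hy.le (hξ.1 ω).1,
    (mul_le_mul_of_nonneg_left (hξ.1 ω).2 hy.le).trans_eq (by field_simp)⟩

lemma sum_riskEnv_mul_le_add (hp : ∀ ω, 0 ≤ p ω) (hξ : ξ ∈ riskEnv y p) {f g : Ω → ℝ}
    {D : ℝ} (h : ∀ ω, f ω ≤ g ω + D) :
    ∑ ω, ξ ω * p ω * f ω ≤ ∑ ω, ξ ω * p ω * g ω + D :=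
  calc ∑ ω, ξ ω * p ω * f ω ≤ ∑ ω, ξ ω * p ω * (g ω + D) :=
        sum_le_sum fun ω _ => mul_le_mul_of_nonneg_left (h ω) (mul_nonneg (hξ.1 ω).1 (hp ω))
    _ = ∑ ω, ξ ω * p ω * g ω + D := by
        simp only [mul_add, sum_add_distrib, ← sum_mul, hξ.2, one_mul]

lemma sum_riskEnv_mul_le (hp : ∀ ω, 0 ≤ p ω) (hξ : ξ ∈ riskEnv y p) {f : Ω → ℝ}
    {B : ℝ} (h : ∀ ω, f ω ≤ B) : ∑ ω, ξ ω * p ω * f ω ≤ B := by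
  simpa using sum_riskEnv_mul_le_add hp hξ (g := 0) (by simpa using h)

end riskEnv

section bellman

variable {S A : Type*} [Fintype S] [Fintype A] [Nonempty A]
  {P : S → A → S → ℝ} {c : S → A → ℝ} {γ : ℝ} {Q Q' : S → A → ℝ → ℝ} {s : S} {a : A}
  {y B D : ℝ}

lemma bellman_le_bellman_add (hp : ∀ s', 0 ≤ P s a s') (hsum : ∑ s', P s a s' = 1)
    (hγ : 0 ≤ γ) (hQ' : ∀ s a, ∀ t ∈ Icc (0 : ℝ) 1, Q' s a t ≤ B)
    (hle : ∀ s a, ∀ t ∈ Icc (0 : ℝ) 1, Q s a t ≤ Q' s a t + D) (hy : y ∈ Ioc (0 : ℝ) 1) :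
    bellman P c γ Q s a y ≤ bellman P c γ Q' s a y + γ * D := by
  have hU : (riskEnv y (P s a)).Nonempty := ⟨_, one_mem_riskEnv hy.1 hy.2 hsum⟩
  have hinf := Finset.inf'_le_inf'_add univ_nonempty (D := D) fun a' _ =>
    csSup_image_le_csSup_image_add hU
      ⟨B, by
        rintro _ ⟨ξ, hξ, rfl⟩
        exact sum_riskEnv_mul_le hp hξ fun s' =>
          hQ' s' a' _ (mul_mem_Icc_of_mem_riskEnv hy.1 hξ s')⟩
      fun ξ hξ => sum_riskEnv_mul_le_add hp hξ fun s' =>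
        hle s' a' _ (mul_mem_Icc_of_mem_riskEnv hy.1 hξ s')
  unfold bellman
  linarith [mul_le_mul_of_nonneg_left hinf hγ]

lemma abs_bellman_sub_bellman_le (hp : ∀ s', 0 ≤ P s a s') (hsum : ∑ s', P s a s' = 1)
    (hγ : 0 ≤ γ) (hQ' : ∀ s a, ∀ t ∈ Icc (0 : ℝ) 1, Q' s a t ≤ B)
    (hD : ∀ s a, ∀ t ∈ Icc (0 : ℝ) 1, |Q s a t - Q' s a t| ≤ D) (hy : y ∈ Ioc (0 : ℝ) 1) :
    |bellman P c γ Q s a y - bellman P c γ Q' s a y| ≤ γ * D := by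
  have hQ : ∀ s a, ∀ t ∈ Icc (0 : ℝ) 1, Q s a t ≤ B + D := fun s a t ht => by
    linarith [hQ' s a t ht, (abs_le.mp (hD s a t ht)).2]
  have h₁ : bellman P c γ Q s a y ≤ bellman P c γ Q' s a y + γ * D :=
    bellman_le_bellman_add hp hsum hγ hQ' (fun s a t ht => by
      linarith [(abs_le.mp (hD s a t ht)).2]) hy
  have h₂ : bellman P c γ Q' s a y ≤ bellman P c γ Q s a y + γ * D :=
    bellman_le_bellman_add hp hsum hγ hQ (fun s a t ht => by
      linarith [(abs_le.mp (hD s a t ht)).1]) hy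
  exact abs_sub_le_iff.mpr ⟨by linarith, by linarith⟩

end bellman

section supDist

variable {S A : Type*} {Q Q' : S → A → ℝ → ℝ} {D : ℝ}

def supDist (Q Q' : S → A → ℝ → ℝ) : ℝ :=
  sSup {d : ℝ | ∃ s a, ∃ y ∈ Icc (0 : ℝ) 1, d = |Q s a y - Q' s a y|}

lemma supDist_nonneg : 0 ≤ supDist Q Q' :=
  Real.sSup_nonneg <| by
    rintro _ ⟨s, a, y, -, rfl⟩
    exact abs_nonneg _

lemma supDist_le (hD : 0 ≤ D) (h : ∀ s a, ∀ y ∈ Icc (0 : ℝ) 1, |Q s a y - Q' s a y| ≤ D) :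
    supDist Q Q' ≤ D :=
  Real.sSup_le (by rintro _ ⟨s, a, y, hy, rfl⟩; exact h s a y hy) hD

lemma abs_sub_le_supDist (hQ : ∃ B : ℝ, ∀ s a, ∀ y ∈ Icc (0 : ℝ) 1, |Q s a y| ≤ B)
    (hQ' : ∃ B : ℝ, ∀ s a, ∀ y ∈ Icc (0 : ℝ) 1, |Q' s a y| ≤ B)
    (s : S) (a : A) {y : ℝ} (hy : y ∈ Icc (0 : ℝ) 1) :
    |Q s a y - Q' s a y| ≤ supDist Q Q' := by
  obtain ⟨B, hB⟩ := hQ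
  obtain ⟨B', hB'⟩ := hQ'
  refine le_csSup ⟨B + B', ?_⟩ ⟨s, a, y, hy, rfl⟩
  rintro _ ⟨s, a, y, hy, rfl⟩
  exact (abs_sub _ _).trans (add_le_add (hB s a y hy) (hB' s a y hy))

end supDist

theorem bellman_value_iteration_converges_general {S A : Type*}
    [Fintype S] [Fintype A] [Nonempty A]
    (P : S → A → S → ℝ)
    (hP : ∀ s a, (∀ s', 0 ≤ P s a s') ∧ ∑ s', P s a s' = 1)
    (c : S → A → ℝ) {γ : ℝ} (hγ0 : 0 ≤ γ) (hγ1 : γ < 1)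
    (Qf Q0 : S → A → ℝ → ℝ)
    (hbf : ∃ B : ℝ, ∀ s a, ∀ y ∈ Set.Icc (0:ℝ) 1, |Qf s a y| ≤ B)
    (hb0 : ∃ B : ℝ, ∀ s a, ∀ y ∈ Set.Icc (0:ℝ) 1, |Q0 s a y| ≤ B)
    (hfix : ∀ s a, ∀ y ∈ Set.Ioc (0:ℝ) 1, bellman P c γ Qf s a y = Qf s a y)
    (Qs : ℕ → S → A → ℝ → ℝ)
    (hQs0 : Qs 0 = Q0)
    (hstep : ∀ k s a, ∀ y ∈ Set.Ioc (0:ℝ) 1,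
      Qs (k + 1) s a y = bellman P c γ (Qs k) s a y)
    (hstep0 : ∀ k s a, Qs (k + 1) s a 0 = Qf s a 0) :
    (∀ k : ℕ,
      sSup {d : ℝ | ∃ s a, ∃ y ∈ Set.Icc (0:ℝ) 1, d = |Qs k s a y - Qf s a y|}
        ≤ γ ^ k *
          sSup {d : ℝ | ∃ s a, ∃ y ∈ Set.Icc (0:ℝ) 1, d = |Q0 s a y - Qf s a y|}) ∧
    Filter.Tendsto
      (fun k => sSup {d : ℝ | ∃ s a, ∃ y ∈ Set.Icc (0:ℝ) 1, d = |Qs k s a y - Qf s a y|})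
      Filter.atTop (nhds 0) := by
  obtain ⟨Bf, hBf⟩ := hbf
  have hD0 : 0 ≤ supDist Q0 Qf := supDist_nonneg
  have herr : ∀ k s a, ∀ y ∈ Icc (0 : ℝ) 1,
      |Qs k s a y - Qf s a y| ≤ γ ^ k * supDist Q0 Qf := by
    intro k
    induction k with
    | zero => simpa [hQs0] using abs_sub_le_supDist hb0 ⟨Bf, hBf⟩
    | succ k ih =>
      rintro s a y ⟨hy0, hy1⟩
      rcases hy0.eq_or_lt with rfl | hy0
      · rw [hstep0, sub_self, abs_zero]
        positivity
      · rw [hstep k s a y ⟨hy0, hy1⟩, ← hfix s a y ⟨hy0, hy1⟩, pow_succ', mul_assoc]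
        exact abs_bellman_sub_bellman_le (hP s a).1 (hP s a).2 hγ0
          (fun s a t ht => (le_abs_self _).trans (hBf s a t ht)) ih ⟨hy0, hy1⟩
  have hgeom : ∀ k, supDist (Qs k) Qf ≤ γ ^ k * supDist Q0 Qf := fun k =>
    supDist_le (by positivity) (herr k)
  refine ⟨hgeom, squeeze_zero (fun _ => supDist_nonneg) hgeom ?_⟩
  simpa using (tendsto_pow_atTop_nhds_zero_of_lt_one hγ0 hγ1).mul_const (supDist Q0 Qf)

/-- Geometric convergence of value iteration under the CVaR Bellman operator
(convergence part of Theorem 1). -/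
theorem bellman_value_iteration_converges {S A : Type*}
    [Fintype S] [Fintype A] [Nonempty S] [Nonempty A]
    (P : S → A → S → ℝ)
    (hP : ∀ s a, (∀ s', 0 ≤ P s a s') ∧ ∑ s', P s a s' = 1)
    (c : S → A → ℝ) {γ : ℝ} (hγ0 : 0 ≤ γ) (hγ1 : γ < 1)
    (Qf Q0 : S → A → ℝ → ℝ)
    (hbf : ∃ B : ℝ, ∀ s a, ∀ y ∈ Set.Icc (0:ℝ) 1, |Qf s a y| ≤ B)
    (hb0 : ∃ B : ℝ, ∀ s a, ∀ y ∈ Set.Icc (0:ℝ) 1, |Q0 s a y| ≤ B)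
    (hfix : ∀ s a, ∀ y ∈ Set.Ioc (0:ℝ) 1, bellman P c γ Qf s a y = Qf s a y)
    (h00 : ∀ s a, Q0 s a 0 = Qf s a 0)
    (Qs : ℕ → S → A → ℝ → ℝ)
    (hQs0 : Qs 0 = Q0)
    (hstep : ∀ k s a, ∀ y ∈ Set.Ioc (0:ℝ) 1,
      Qs (k + 1) s a y = bellman P c γ (Qs k) s a y)
    (hstep0 : ∀ k s a, Qs (k + 1) s a 0 = Qf s a 0) :
    (∀ k : ℕ,
      sSup {d : ℝ | ∃ s a, ∃ y ∈ Set.Icc (0:ℝ) 1, d = |Qs k s a y - Qf s a y|}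
        ≤ γ ^ k *
          sSup {d : ℝ | ∃ s a, ∃ y ∈ Set.Icc (0:ℝ) 1, d = |Q0 s a y - Qf s a y|}) ∧
    Filter.Tendsto
      (fun k => sSup {d : ℝ | ∃ s a, ∃ y ∈ Set.Icc (0:ℝ) 1, d = |Qs k s a y - Qf s a y|})
      Filter.atTop (nhds 0) :=
  bellman_value_iteration_converges_general P hP c hγ0 hγ1 Qf Q0 hbf hb0 hfix Qs hQs0 hstep hstep0
end
end

section
/- Concavity preservation of the CVaR QD-learning update (Theorem 3): let N ∈ ℕ be the number of agents with neighbor sets N(n) ⊆ {1,…,N}, let s ∈ S, a ∈ A be the current state–action pair and s' ∈ S the observed next state, let α ≥ 0, β ≥ 0 with 1 − α − |N(n)|·β ≥ 0 for every agent n, and let c_n(s,a) ∈ ℝ be agent n's cost. Suppose Q_n : S × A × [0,1] → ℝ are bounded functions such that for every agent n and every (σ,α') ∈ S × A, the map y ↦ y·Q_n(σ,α',y) is concave on [0,1]. Define for each agent n and y ∈ (0,1]: Q'_n(s,a,y) := (1 − α − |N(n)|·β)·Q_n(s,a,y) + β·Σ_{l ∈ N(n)} Q_l(s,a,y) + α·(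 c_n(s,a) + γ · min_{a' ∈ A} sup_{ξ ∈ U(y,P(·|s,a))} ξ(s')·Q_n(s',a', y·ξ(s')) ), where γ ∈ [0,1). Then for every agent n, the map y ↦ y·Q'_n(s,a,y) is concave on (0,1]. -/
noncomputable section

/-!
Substituting `t = y ξ(s')` turns `y · ξ(s') Q(s', a', y ξ(s'))` into `g(t) = t Q(s', a', t)`.
As `ξ` ranges over `U(y, P(·|s,a))`, `t` ranges over the interval
`{t ∈ [0,1] | y - (1 - p) ≤ t p ≤ y}` with `p = P(s'|s,a)`. These intervals form a convex set of
pairs `(y, t)`, so `y ↦ sup_t g(t)` is concave, being the partial maximisation of a concave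
function over a convex set. Multiplied by `y`, the update is a nonnegative combination of such
functions (after a minimum over `a'`, which commutes with multiplication by `y ≥ 0`), of the
concave maps `y ↦ y Q(s, a, y)`, and of a linear term.
-/

open Set

section Concave

variable {𝕜 E β ι : Type*} [Semiring 𝕜] [PartialOrder 𝕜] [AddCommMonoid E] [SMul 𝕜 E]
  {s : Set E}

theorem ConcaveOn.finset_sum [AddCommMonoid β] [PartialOrder β] [IsOrderedAddMonoid β]
    [Module 𝕜 β] (hs : Convex 𝕜 s) {t : Finset ι} {f : ι → E → β}
    (hf : ∀ i ∈ t, ConcaveOn 𝕜 s (f i)) : ConcaveOn 𝕜 s fun x => ∑ i ∈ t, f i x := by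
  classical
  induction t using Finset.induction_on with
  | empty => simpa using concaveOn_const 0 hs
  | insert i t hi ih =>
    simp only [Finset.sum_insert hi]
    exact (hf i (t.mem_insert_self i)).add (ih fun j hj => hf j (Finset.mem_insert_of_mem hj))

theorem ConcaveOn.finset_inf' [AddCommMonoid β] [LinearOrder β] [IsOrderedAddMonoid β]
    [Module 𝕜 β] [PosSMulStrictMono 𝕜 β] {t : Finset ι} (ht : t.Nonempty) {f : ι → E → β}
    (hf : ∀ i ∈ t, ConcaveOn 𝕜 s (f i)) : ConcaveOn 𝕜 s fun x => t.inf' ht fun i => f i x := by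
  induction ht using Finset.Nonempty.cons_induction with
  | singleton i => simpa using hf i (Finset.mem_singleton_self i)
  | cons i t hi ht ih =>
    simp only [Finset.inf'_cons (H := ht)]
    exact (hf i (t.mem_cons_self i)).inf (ih fun j hj => hf j (Finset.mem_cons_of_mem hj))

end Concave

theorem ConcaveOn.sSup_image {E F : Type*} [AddCommGroup E] [Module ℝ E] [AddCommGroup F]
    [Module ℝ F] {s : Set E} {D : Set F} {T : E → Set F} {g : F → ℝ} (hg : ConcaveOn ℝ D g)
    (hgraph : Convex ℝ {z : E × F | z.1 ∈ s ∧ z.2 ∈ T z.1}) (hTD : ∀ x ∈ s, T x ⊆ D)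
    (hne : ∀ x ∈ s, (T x).Nonempty) (hbdd : ∀ x ∈ s, BddAbove (g '' T x)) :
    ConcaveOn ℝ s fun x => sSup (g '' T x) := by
  have hs : Convex ℝ s := by
    intro x hx y hy a b ha hb hab
    obtain ⟨u, hu⟩ := hne x hx
    obtain ⟨v, hv⟩ := hne y hy
    exact (hgraph (x := (x, u)) ⟨hx, hu⟩ (y := (y, v)) ⟨hy, hv⟩ ha hb hab).1
  refine ⟨hs, fun x hx y hy a b ha hb hab => ?_⟩
  rw [← Real.sSup_smul_of_nonneg ha, ← Real.sSup_smul_of_nonneg hb,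
    ← csSup_add ((hne x hx).image g).smul_set ((hbdd x hx).smul_of_nonneg ha)
      ((hne y hy).image g).smul_set ((hbdd y hy).smul_of_nonneg hb)]
  refine csSup_le (((hne x hx).image g).smul_set.add ((hne y hy).image g).smul_set) ?_
  rintro _ ⟨_, ⟨_, ⟨u, hu, rfl⟩, rfl⟩, _, ⟨_, ⟨v, hv, rfl⟩, rfl⟩, rfl⟩
  have hmem : a • u + b • v ∈ T (a • x + b • y) :=
    (hgraph (x := (x, u)) ⟨hx, hu⟩ (y := (y, v)) ⟨hy, hv⟩ ha hb hab).2
  calc a • g u + b • g v ≤ g (a • u + b • v) := hg.2 (hTD x hx hu) (hTD y hy hv) ha hb hab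
    _ ≤ sSup (g '' T (a • x + b • y)) :=
      le_csSup (hbdd _ (hs hx hy ha hb hab)) (mem_image_of_mem g hmem)

theorem bddAbove_image_Icc_mul_of_abs_le {f : ℝ → ℝ} {B : ℝ} (hf : ∀ t ∈ Icc (0 : ℝ) 1, |f t| ≤ B) :
    BddAbove ((fun t => t * f t) '' Icc 0 1) := by
  refine ⟨B, forall_mem_image.2 fun t ht => ?_⟩
  calc t * f t ≤ |t| * |f t| := (le_abs_self _).trans (abs_mul _ _).le
    _ ≤ |f t| := mul_le_of_le_one_left (abs_nonneg _) (abs_le.2 ⟨by linarith [ht.1], ht.2⟩)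
    _ ≤ B := hf t ht

section RiskEnvelope

variable {Ω : Type*} [Fintype Ω] {p : Ω → ℝ} {y : ℝ}

theorem image_riskEnv_mul_apply (hp0 : ∀ ω, 0 ≤ p ω) (hp1 : ∑ ω, p ω = 1) (hy : 0 < y) (ω : Ω) :
    (fun ξ => y * ξ ω) '' riskEnv y p =
      {t | t ∈ Icc 0 1 ∧ y - (1 - p ω) ≤ t * p ω ∧ t * p ω ≤ y} := by
  classical
  have hrest : ∑ ω' ∈ Finset.univ.erase ω, p ω' = 1 - p ω := by
    rw [Finset.sum_erase_eq_sub (Finset.mem_univ ω), hp1]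
  ext t
  constructor
  · rintro ⟨ξ, ⟨hξ, hsum⟩, rfl⟩
    have hterm : ξ ω * p ω ≤ 1 :=
      hsum ▸ Finset.single_le_sum (fun ω' _ => mul_nonneg (hξ ω').1 (hp0 ω')) (Finset.mem_univ ω)
    have hother : 1 - ξ ω * p ω ≤ 1 / y * (1 - p ω) := by
      rw [← hsum, ← Finset.sum_erase_eq_sub (Finset.mem_univ ω), hsum, ← hrest, Finset.mul_sum]
      exact Finset.sum_le_sum fun ω' _ => mul_le_mul_of_nonneg_right (hξ ω').2 (hp0 ω')
    have hupper : y * ξ ω ≤ 1 := by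
      simpa [hy.ne'] using mul_le_mul_of_nonneg_left (hξ ω).2 hy.le
    refine ⟨⟨mul_nonneg hy.le (hξ ω).1, hupper⟩, ?_, ?_⟩
    · have := mul_le_mul_of_nonneg_left hother hy.le
      field_simp at this
      nlinarith
    · nlinarith
  · rintro ⟨⟨ht0, ht1⟩, hlow, hup⟩
    -- `ξ` is `t / y` at `ω` and `r / y` elsewhere; when `p ω = 1`, `r = 0` since `x / 0 = 0`
    set r := (y - t * p ω) / (1 - p ω)
    have hr : r * (1 - p ω) = y - t * p ω := by
      rcases eq_or_ne (1 - p ω) 0 with h | h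
      · simp only [h, mul_zero]; nlinarith
      · exact div_mul_cancel₀ _ h
    have hr0 : 0 ≤ r := div_nonneg (by linarith) (by linarith)
    have hr1 : r ≤ 1 := div_le_one_of_le₀ (by linarith) (by linarith)
    refine ⟨fun ω' => (if ω' = ω then t else r) / y, ⟨fun ω' => ?_, ?_⟩, ?_⟩
    · have h0 : 0 ≤ if ω' = ω then t else r := by split_ifs <;> assumption
      have h1 : (if ω' = ω then t else r) ≤ 1 := by split_ifs <;> assumption
      exact ⟨div_nonneg h0 hy.le, div_le_div_of_nonneg_right h1 hy.le⟩
    · rw [← Finset.add_sum_erase _ _ (Finset.mem_univ ω)]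
      have hoff : ∑ ω' ∈ Finset.univ.erase ω, (if ω' = ω then t else r) / y * p ω' =
          r / y * (1 - p ω) := by
        rw [← hrest, Finset.mul_sum]
        exact Finset.sum_congr rfl fun ω' hω' => by rw [if_neg (Finset.ne_of_mem_erase hω')]
      rw [hoff]
      dsimp only
      rw [if_pos rfl]
      field_simp
      linarith
    · dsimp only
      rw [if_pos rfl]
      field_simp

theorem convex_graph_image_riskEnv_mul_apply (hp0 : ∀ ω, 0 ≤ p ω) (hp1 : ∑ ω, p ω = 1) (ω : Ω) :
    Convex ℝ {z : ℝ × ℝ | z.1 ∈ Ioc 0 1 ∧ z.2 ∈ (fun ξ => z.1 * ξ ω) '' riskEnv z.1 p} := by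
  have hgraph : {z : ℝ × ℝ | z.1 ∈ Ioc 0 1 ∧ z.2 ∈ (fun ξ => z.1 * ξ ω) '' riskEnv z.1 p} =
      {z | z.1 ∈ Ioc 0 1 ∧ z.2 ∈ Icc 0 1 ∧ z.1 - (1 - p ω) ≤ z.2 * p ω ∧ z.2 * p ω ≤ z.1} := by
    ext ⟨y, t⟩
    simp only [mem_ofPred_eq]
    exact and_congr_right fun hy => by rw [image_riskEnv_mul_apply hp0 hp1 hy.1 ω, mem_ofPred_eq]
  rw [hgraph]
  rintro ⟨y₁, t₁⟩ ⟨hy₁, ht₁, hl₁, hu₁⟩ ⟨y₂, t₂⟩ ⟨hy₂, ht₂, hl₂, hu₂⟩ a b ha hb hab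
  dsimp only at hl₁ hu₁ hl₂ hu₂
  simp only [Prod.smul_mk, Prod.mk_add_mk, mem_ofPred_eq]
  refine ⟨convex_Ioc 0 1 hy₁ hy₂ ha hb hab, convex_Icc 0 1 ht₁ ht₂ ha hb hab, ?_, ?_⟩ <;>
    simp only [smul_eq_mul]
  · nlinarith [mul_le_mul_of_nonneg_left hl₁ ha, mul_le_mul_of_nonneg_left hl₂ hb]
  · nlinarith [mul_le_mul_of_nonneg_left hu₁ ha, mul_le_mul_of_nonneg_left hu₂ hb]

theorem concaveOn_mul_sSup_riskEnv (hp0 : ∀ ω, 0 ≤ p ω) (hp1 : ∑ ω, p ω = 1) (ω : Ω)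
    {f : ℝ → ℝ} (hf : ConcaveOn ℝ (Icc 0 1) fun t => t * f t)
    (hbdd : BddAbove ((fun t => t * f t) '' Icc 0 1)) :
    ConcaveOn ℝ (Ioc 0 1) fun y => y * sSup ((fun ξ => ξ ω * f (y * ξ ω)) '' riskEnv y p) := by
  have hp1le : p ω ≤ 1 :=
    hp1 ▸ Finset.single_le_sum (fun ω' _ => hp0 ω') (Finset.mem_univ ω)
  have hsubst : ∀ y ∈ Ioc (0 : ℝ) 1,
      sSup ((fun t => t * f t) '' ((fun ξ => y * ξ ω) '' riskEnv y p)) =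
        y * sSup ((fun ξ => ξ ω * f (y * ξ ω)) '' riskEnv y p) := by
    intro y hy
    rw [← smul_eq_mul, ← Real.sSup_smul_of_nonneg hy.1.le, ← image_smul, image_image, image_image]
    simp only [smul_eq_mul, mul_assoc]
  have hIcc : ∀ y ∈ Ioc (0 : ℝ) 1, (fun ξ => y * ξ ω) '' riskEnv y p ⊆ Icc 0 1 := by
    intro y hy
    rw [image_riskEnv_mul_apply hp0 hp1 hy.1 ω]
    exact fun t ht => ht.1
  refine (ConcaveOn.sSup_image hf (convex_graph_image_riskEnv_mul_apply hp0 hp1 ω) hIcc ?_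
    fun y hy => hbdd.mono (image_mono (hIcc y hy))).congr hsubst
  intro y hy
  rw [image_riskEnv_mul_apply hp0 hp1 hy.1 ω]
  exact ⟨y, Ioc_subset_Icc_self hy, by nlinarith [hy.2], by nlinarith [hy.1]⟩

end RiskEnvelope

theorem cvar_qd_update_concave_general {S A : Type*} [Fintype S] [Fintype A] [Nonempty A]
    (P : S → A → S → ℝ)
    (hP : ∀ s a, (∀ s', 0 ≤ P s a s') ∧ ∑ s', P s a s' = 1)
    {γ : ℝ} (hγ0 : 0 ≤ γ)
    (N : ℕ) (Nbr : Fin N → Finset (Fin N))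
    (s : S) (a : A) (s' : S)
    (α β : ℝ) (hα : 0 ≤ α) (hβ : 0 ≤ β)
    (hαβ : ∀ n : Fin N, 0 ≤ 1 - α - (Nbr n).card * β)
    (cost : Fin N → ℝ)
    (Q : Fin N → S → A → ℝ → ℝ)
    (hb : ∃ B : ℝ, ∀ n σ a', ∀ y ∈ Set.Icc (0:ℝ) 1, |Q n σ a' y| ≤ B)
    (hconc : ∀ n σ a', ConcaveOn ℝ (Set.Icc (0:ℝ) 1) (fun y => y * Q n σ a' y))
    (Q' : Fin N → ℝ → ℝ)
    (hQ' : ∀ n : Fin N, ∀ y ∈ Set.Ioc (0:ℝ) 1,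
      Q' n y = (1 - α - (Nbr n).card * β) * Q n s a y
        + β * ∑ l ∈ Nbr n, Q l s a y
        + α * (cost n + γ * Finset.univ.inf' Finset.univ_nonempty (fun a' : A =>
            sSup ((fun ξ : S → ℝ => ξ s' * Q n s' a' (y * ξ s')) ''
              riskEnv y (P s a))))) :
    ∀ n : Fin N, ConcaveOn ℝ (Set.Ioc (0:ℝ) 1) (fun y => y * Q' n y) := by
  intro n
  obtain ⟨B, hB⟩ := hb
  have hIoc : Convex ℝ (Ioc (0 : ℝ) 1) := convex_Ioc 0 1
  have hQ : ∀ l σ a', ConcaveOn ℝ (Ioc 0 1) fun y => y * Q l σ a' y := fun l σ a' =>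
    (hconc l σ a').subset Ioc_subset_Icc_self hIoc
  have hrisk := fun a' => concaveOn_mul_sSup_riskEnv (hP s a).1 (hP s a).2 s' (hconc n s' a')
    (bddAbove_image_Icc_mul_of_abs_le (hB n s' a'))
  have hsum : ConcaveOn ℝ (Ioc 0 1) fun y =>
      (1 - α - (Nbr n).card * β) * (y * Q n s a y) + β * ∑ l ∈ Nbr n, y * Q l s a y
        + α * cost n * y + α * γ * Finset.univ.inf' Finset.univ_nonempty fun a' =>
          y * sSup ((fun ξ : S → ℝ => ξ s' * Q n s' a' (y * ξ s')) '' riskEnv y (P s a)) :=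
    (((hQ n s a).smul (hαβ n)).add ((ConcaveOn.finset_sum hIoc fun l _ => hQ l s a).smul hβ)
      |>.add ((LinearMap.mul ℝ ℝ (α * cost n)).concaveOn hIoc)).add
      ((ConcaveOn.finset_inf' Finset.univ_nonempty fun a' _ => hrisk a').smul (mul_nonneg hα hγ0))
  refine hsum.congr fun y hy => ?_
  have hmul : ∀ F : A → ℝ, y * Finset.univ.inf' Finset.univ_nonempty F =
      Finset.univ.inf' Finset.univ_nonempty fun a' => y * F a' := fun F =>
    Finset.apply_inf'_eq_inf'_comp _ _ fun u v => mul_min_of_nonneg u v hy.1.le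
  dsimp only
  rw [hQ' n y hy, ← hmul, ← Finset.mul_sum]
  ring

/-- Concavity preservation of the CVaR QD-learning update (Theorem 3). -/
theorem cvar_qd_update_concave {S A : Type*} [Fintype S] [Fintype A] [Nonempty S] [Nonempty A]
    (P : S → A → S → ℝ)
    (hP : ∀ s a, (∀ s', 0 ≤ P s a s') ∧ ∑ s', P s a s' = 1)
    {γ : ℝ} (hγ0 : 0 ≤ γ) (hγ1 : γ < 1)
    (N : ℕ) (Nbr : Fin N → Finset (Fin N))
    (s : S) (a : A) (s' : S)
    (α β : ℝ) (hα : 0 ≤ α) (hβ : 0 ≤ β)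
    (hαβ : ∀ n : Fin N, 0 ≤ 1 - α - (Nbr n).card * β)
    (cost : Fin N → ℝ)
    (Q : Fin N → S → A → ℝ → ℝ)
    (hb : ∃ B : ℝ, ∀ n σ a', ∀ y ∈ Set.Icc (0:ℝ) 1, |Q n σ a' y| ≤ B)
    (hconc : ∀ n σ a', ConcaveOn ℝ (Set.Icc (0:ℝ) 1) (fun y => y * Q n σ a' y))
    (Q' : Fin N → ℝ → ℝ)
    (hQ' : ∀ n : Fin N, ∀ y ∈ Set.Ioc (0:ℝ) 1,
      Q' n y = (1 - α - (Nbr n).card * β) * Q n s a y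
        + β * ∑ l ∈ Nbr n, Q l s a y
        + α * (cost n + γ * Finset.univ.inf' Finset.univ_nonempty (fun a' : A =>
            sSup ((fun ξ : S → ℝ => ξ s' * Q n s' a' (y * ξ s')) ''
              riskEnv y (P s a))))) :
    ∀ n : Fin N, ConcaveOn ℝ (Set.Ioc (0:ℝ) 1) (fun y => y * Q' n y) :=
  cvar_qd_update_concave_general P hP hγ0 N Nbr s a s' α β hα hβ hαβ cost Q hb hconc Q' hQ'
end
end
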